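/- arXiv:1505.06635 — 2 statements merged into one kernel-verified Lean document; each statement's English description precedes it below -/
import Mathlib

section
/- For every natural number n ≥ 1 and every complex number z with z ≠ 0 and z² ≠ 1: F_n(z) = (zⁿ/(z²−1)) · ( ((2n+1)z² − 1) P_n(J(z)) − 2nz P_{n−1}(J(z)) ) and G_n(z) = (zⁿ/(z²−1)) · ( (z² − (2n+1)) P_n(J(z)) + 2nz P_{n−1}(J(z)) ). -/
open Polynomial Finset

/-- The degree-`n` Legendre polynomial (over `ℂ`), defined by the Rodrigues formula
`P_n(x) = (1/(2^n n!)) dⁿ/dxⁿ (x²−1)ⁿ`. -/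
noncomputable def legendre (n : ℕ) : Polynomial ℂ :=
  Polynomial.C (1 / (2 ^ n * n.factorial : ℂ)) *
    Polynomial.derivative^[n] ((Polynomial.X ^ 2 - 1) ^ n)

/-- `P_n(z)`, the value of the degree-`n` Legendre polynomial at `z ∈ ℂ`. -/
noncomputable def P (n : ℕ) (z : ℂ) : ℂ := (legendre n).eval z

/-- `P_n'(z)`, the value of the derivative of the degree-`n` Legendre polynomial at `z ∈ ℂ`. -/
noncomputable def P' (n : ℕ) (z : ℂ) : ℂ := (Polynomial.derivative (legendre n)).eval z

/-- The Joukowski map `J(z) = (z + 1/z)/2`. -/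
noncomputable def J (z : ℂ) : ℂ := (z + 1 / z) / 2

/-- `F_n(z) = (n+1) zⁿ P_n(J(z)) + (z^{n−1}(z²−1)/2) P_n'(J(z))`. -/
noncomputable def F (n : ℕ) (z : ℂ) : ℂ :=
  (n + 1) * z ^ (n : ℤ) * P n (J z) + z ^ ((n : ℤ) - 1) * (z ^ 2 - 1) / 2 * P' n (J z)

/-- `G_n(z) = z^{2n} F_n(1/z)`. -/
noncomputable def G (n : ℕ) (z : ℂ) : ℂ := z ^ (2 * n) * F n (1 / z)

/-! Differentiating Rodrigues' formula gives `P'_{n+1} = X P'_n + (n+1) P_n` and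
`(n+1) P_{n+1} = (X²-1) P'_n + (n+1) X P_n`, whence `(x²-1) P'_n(x) = n (x P_n(x) - P_{n-1}(x))`.
At `x = J(z)` one has `2 z J(z) = z² + 1` and `4 z² (J(z)² - 1) = (z² - 1)²`, which eliminates
`P'_n` from `F_n`; the formula for `G_n` follows from the one for `F_n` since `J(1/z) = J(z)`. -/

namespace Polynomial

variable {R : Type*} [CommRing R]

theorem derivative_X_sq_sub_one_pow_succ (n : ℕ) :
    derivative ((X ^ 2 - 1) ^ (n + 1) : R[X]) =
      ((2 * (n + 1) : ℕ) : R[X]) * ((X ^ 2 - 1) ^ n * X) := by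
  rw [derivative_pow_succ, derivative_sub, derivative_X_sq, derivative_one, sub_zero]
  push_cast
  simp only [C_eq_natCast, map_add, map_one, C_ofNat]
  ring

variable (R) in
noncomputable def rodrigues (n : ℕ) : R[X] := derivative^[n] ((X ^ 2 - 1) ^ n)

theorem derivative_rodrigues_succ (n : ℕ) :
    derivative (rodrigues R (n + 1)) = ((2 * (n + 1) : ℕ) : R[X]) *
      (derivative (rodrigues R n) * X + (n + 1 : ℕ) • rodrigues R n) := by
  rw [rodrigues, ← Function.iterate_succ_apply' derivative, Function.iterate_succ_apply,
    derivative_X_sq_sub_one_pow_succ, iterate_derivative_natCast_mul, iterate_derivative_mul_X,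
    Function.iterate_succ_apply', Nat.add_sub_cancel, rodrigues]

theorem rodrigues_succ (n : ℕ) :
    rodrigues R (n + 1) = 2 * (X ^ 2 - 1) * derivative (rodrigues R n) +
      ((2 * (n + 1) : ℕ) : R[X]) * X * rodrigues R n := by
  -- Expand `D^{n+1} (X²-1)^{n+1}` in two ways and eliminate `D^{n-1} (X²-1)^n`.
  have via_derivative : rodrigues R (n + 1) = ((2 * (n + 1) : ℕ) : R[X]) *
      (rodrigues R n * X + n • derivative^[n - 1] ((X ^ 2 - 1) ^ n)) := by
    rw [rodrigues, Function.iterate_succ_apply, derivative_X_sq_sub_one_pow_succ,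
      iterate_derivative_natCast_mul, iterate_derivative_mul_X, rodrigues]
  have via_product : rodrigues R (n + 1) = derivative (rodrigues R n) * (X ^ 2 - 1) +
      ((2 * (n + 1) : ℕ) : R[X]) * X * rodrigues R n +
      (n + 1 : ℕ) • n • derivative^[n - 1] ((X ^ 2 - 1) ^ n) := by
    have h : ((X ^ 2 - 1) ^ (n + 1) : R[X]) = (X ^ 2 - 1) ^ n * X * X - (X ^ 2 - 1) ^ n := by ring
    rw [rodrigues, h, iterate_derivative_sub, iterate_derivative_mul_X, iterate_derivative_mul_X,
      Nat.add_sub_cancel, Function.iterate_succ_apply', iterate_derivative_mul_X, rodrigues]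
    push_cast
    ring
  simp only [nsmul_eq_mul] at via_derivative via_product ⊢
  push_cast at via_derivative via_product ⊢
  linear_combination 2 * via_product - via_derivative

end Polynomial

theorem legendre_eq_C_mul_rodrigues (n : ℕ) :
    legendre n = C (1 / (2 ^ n * n.factorial : ℂ)) * rodrigues ℂ n := rfl

theorem C_one_div_two_pow_mul_factorial_succ_mul (n : ℕ) :
    C (1 / (2 ^ (n + 1) * (n + 1).factorial : ℂ)) * ((2 * (n + 1) : ℕ) : ℂ[X]) =
      C (1 / (2 ^ n * n.factorial : ℂ)) := by
  rw [← C_eq_natCast, ← C_mul, Nat.factorial_succ]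
  congr 1
  have : (n.factorial : ℂ) ≠ 0 := Nat.cast_ne_zero.2 n.factorial_ne_zero
  field_simp
  push_cast
  ring

theorem derivative_legendre_succ (n : ℕ) :
    derivative (legendre (n + 1)) =
      X * derivative (legendre n) + ((n : ℂ[X]) + 1) * legendre n := by
  simp only [legendre_eq_C_mul_rodrigues, derivative_C_mul, derivative_rodrigues_succ]
  rw [← mul_assoc, C_one_div_two_pow_mul_factorial_succ_mul, nsmul_eq_mul]
  push_cast
  ring

theorem succ_mul_legendre_succ (n : ℕ) :
    ((n : ℂ[X]) + 1) * legendre (n + 1) =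
      (X ^ 2 - 1) * derivative (legendre n) + ((n : ℂ[X]) + 1) * X * legendre n := by
  rw [legendre_eq_C_mul_rodrigues (n + 1), rodrigues_succ]
  have h := C_one_div_two_pow_mul_factorial_succ_mul n
  simp only [legendre_eq_C_mul_rodrigues, derivative_C_mul]
  push_cast at h ⊢
  linear_combination
    ((X ^ 2 - 1) * derivative (rodrigues ℂ n) + ((n : ℂ[X]) + 1) * X * rodrigues ℂ n) * h

theorem X_sq_sub_one_mul_derivative_legendre (n : ℕ) :
    (X ^ 2 - 1) * derivative (legendre n) = (n : ℂ[X]) * (X * legendre n - legendre (n - 1)) := by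
  cases n with
  | zero => simp [legendre]
  | succ n =>
    rw [derivative_legendre_succ, Nat.add_sub_cancel]
    push_cast
    linear_combination -X * succ_mul_legendre_succ n

theorem sq_sub_one_mul_P' (n : ℕ) (x : ℂ) :
    (x ^ 2 - 1) * P' n x = n * (x * P n x - P (n - 1) x) := by
  simpa [P, P'] using congrArg (eval x) (X_sq_sub_one_mul_derivative_legendre n)

theorem J_one_div (z : ℂ) : J (1 / z) = J z := by
  rw [J, J, one_div_one_div, add_comm]

theorem two_mul_mul_J {z : ℂ} (hz : z ≠ 0) : 2 * z * J z = z ^ 2 + 1 := by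
  rw [J]
  field_simp

theorem sq_sub_one_mul_P'_J (n : ℕ) {z : ℂ} (hz : z ≠ 0) :
    (z ^ 2 - 1) ^ 2 * P' n (J z) =
      2 * z * n * ((z ^ 2 + 1) * P n (J z) - 2 * z * P (n - 1) (J z)) := by
  -- `(z² - 1)² = 4 z² (J(z)² - 1)` because `2 z J(z) = z² + 1`
  linear_combination (4 * z ^ 2) * sq_sub_one_mul_P' n (J z) +
    (2 * z * n * P n (J z) - (z ^ 2 + 1 + 2 * z * J z) * P' n (J z)) * two_mul_mul_J hz

theorem F_eq {n : ℕ} {z : ℂ} (hz : z ≠ 0) (hz2 : z ^ 2 ≠ 1) :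
    F n z = (z ^ (n : ℤ) / (z ^ 2 - 1)) *
        (((2 * n + 1) * z ^ 2 - 1) * P n (J z) - 2 * n * z * P (n - 1) (J z)) := by
  rw [F, zpow_sub_one₀ hz, zpow_natCast]
  field_simp
  linear_combination sq_sub_one_mul_P'_J n hz

theorem G_eq {n : ℕ} {z : ℂ} (hz : z ≠ 0) (hz2 : z ^ 2 ≠ 1) :
    G n z = (z ^ (n : ℤ) / (z ^ 2 - 1)) *
        ((z ^ 2 - (2 * n + 1)) * P n (J z) + 2 * n * z * P (n - 1) (J z)) := by
  have hinv2 : (1 / z) ^ 2 ≠ 1 := by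
    rwa [one_div, inv_pow, ne_eq, inv_eq_one]
  rw [G, F_eq (one_div_ne_zero hz) hinv2, J_one_div, zpow_natCast, zpow_natCast, two_mul, pow_add,
    one_div, inv_pow]
  field_simp
  ring

theorem F_and_G_formulas_general (n : ℕ) (z : ℂ) (hz : z ≠ 0) (hz2 : z ^ 2 ≠ 1) :
    F n z = (z ^ (n : ℤ) / (z ^ 2 - 1)) *
        (((2 * n + 1) * z ^ 2 - 1) * P n (J z) - 2 * n * z * P (n - 1) (J z)) ∧
    G n z = (z ^ (n : ℤ) / (z ^ 2 - 1)) *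
        ((z ^ 2 - (2 * n + 1)) * P n (J z) + 2 * n * z * P (n - 1) (J z)) :=
  ⟨F_eq hz hz2, G_eq hz hz2⟩

/-- For `n ≥ 1` and `z ≠ 0` with `z² ≠ 1`:
`F_n(z) = (zⁿ/(z²−1)) (((2n+1)z² − 1) P_n(J(z)) − 2nz P_{n−1}(J(z)))` and
`G_n(z) = (zⁿ/(z²−1)) ((z² − (2n+1)) P_n(J(z)) + 2nz P_{n−1}(J(z)))`. -/
theorem F_and_G_formulas (n : ℕ) (hn : 1 ≤ n) (z : ℂ) (hz : z ≠ 0) (hz2 : z ^ 2 ≠ 1) :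
    F n z = (z ^ (n : ℤ) / (z ^ 2 - 1)) *
        (((2 * n + 1) * z ^ 2 - 1) * P n (J z) - 2 * n * z * P (n - 1) (J z)) ∧
    G n z = (z ^ (n : ℤ) / (z ^ 2 - 1)) *
        ((z ^ 2 - (2 * n + 1)) * P n (J z) + 2 * n * z * P (n - 1) (J z)) :=
  F_and_G_formulas_general n z hz hz2
end

section
/- For every natural number n ≥ 1: writing F_n(z) = Σ_{k=0}^{n} c_k z^{2k}, the polynomial G_n satisfies G_n(z) = Σ_{k=0}^{n} c_{n−k} z^{2k}, and moreover c_{n−k} = ((2(n−k)+1)/(2k+1)) · c_k for every 0 ≤ k ≤ n. -/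
/-!
`F_n` is the derivative of `Q(z) = z^{n+1} P_n(J z)`, a polynomial of degree at most `2n + 2`.
Because `J (1/z) = J z`, it is palindromic: `z^{2n+2} Q(1/z) = Q(z)`, i.e. `q_{2n+2-i} = q_i`.
Since `c_k = (2k + 1) q_{2k+1}`, this gives `c_{n-k} / (2(n-k) + 1) = c_k / (2k + 1)`.
The formula for `G_n` only reverses the even polynomial `F_n` of degree `2n`.
-/

open Polynomial Finset

namespace Polynomial

lemma eq_of_eval_eq_of_ne_zero {R : Type*} [CommRing R] [IsDomain R] [Infinite R]
    {p q : R[X]} (h : ∀ x, x ≠ 0 → p.eval x = q.eval x) : p = q :=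
  eq_of_infinite_eval_eq p q <| (Set.finite_singleton 0).infinite_compl.mono fun x hx => h x hx

lemma eval_inv_reflect_mul_pow {K : Type*} [Field K] {x : K} (hx : x ≠ 0) (N : ℕ) (f : K[X])
    (hf : f.natDegree ≤ N) : (reflect N f).eval x⁻¹ * x ^ N = f.eval x := by
  have := invertibleOfNonzero hx
  simpa only [eval₂_id, invOf_eq_inv] using eval₂_reflect_mul_pow (RingHom.id K) x N f hf

lemma coeff_derivative_symm_of_reflect_eq {R : Type*} [CommSemiring R] {q : R[X]} {N i : ℕ}
    (hq : reflect N q = q) (hi : i + 2 ≤ N) :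
    ((i : R) + 1) * (derivative q).coeff (N - 2 - i) =
      ((N - 1 - i : ℕ) : R) * (derivative q).coeff i := by
  have hsymm : q.coeff (N - 1 - i) = q.coeff (i + 1) := by
    conv_rhs => rw [← hq, coeff_reflect, revAt_le (by omega)]
    congr 1
    omega
  have hidx : N - 2 - i + 1 = N - 1 - i := by omega
  rw [coeff_derivative, coeff_derivative, hidx, hsymm, ← hidx]
  push_cast
  ring

end Polynomial

lemma pow_mul_sum_inv_pow_eq {K : Type*} [Field K] (n : ℕ) (c : ℕ → K) {z : K} (hz : z ≠ 0) :
    z ^ (2 * n) * ∑ k ∈ range (n + 1), c k * (1 / z) ^ (2 * k) =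
      ∑ k ∈ range (n + 1), c (n - k) * z ^ (2 * k) := by
  rw [← sum_range_reflect, mul_sum]
  refine sum_congr rfl fun k hk => ?_
  have hk : k ≤ n := Nat.lt_succ_iff.mp (mem_range.mp hk)
  have hpow : z ^ (2 * n) = z ^ (2 * (n - k)) * z ^ (2 * k) := by
    rw [← pow_add]
    congr 1
    omega
  rw [show n + 1 - 1 - k = n - k by omega, hpow, one_div, inv_pow]
  field_simp

lemma legendre_natDegree_le (n : ℕ) : (legendre n).natDegree ≤ n := by
  have hsq : ((X ^ 2 - 1 : ℂ[X]) ^ n).natDegree ≤ 2 * n := by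
    have h2 : (X ^ 2 - 1 : ℂ[X]).natDegree ≤ 2 := by compute_degree
    simpa [mul_comm] using natDegree_pow_le_of_le n h2
  calc (legendre n).natDegree
      ≤ (derivative^[n] ((X ^ 2 - 1 : ℂ[X]) ^ n)).natDegree := natDegree_C_mul_le _ _
    _ ≤ ((X ^ 2 - 1 : ℂ[X]) ^ n).natDegree - n := natDegree_iterate_derivative _ n
    _ ≤ n := by omega

lemma J_inv (z : ℂ) : J z⁻¹ = J z := by
  simp only [J, one_div, inv_inv, add_comm]

lemma J_eq_div {z : ℂ} (hz : z ≠ 0) : J z = (z ^ 2 + 1) / (2 * z) := by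
  unfold J
  field_simp

lemma hasDerivAt_J {z : ℂ} (hz : z ≠ 0) : HasDerivAt J ((1 - (z ^ 2)⁻¹) / 2) z := by
  rw [show J = fun w => (w + w⁻¹) / 2 from funext fun w => by rw [J, one_div]]
  simpa [sub_eq_add_neg] using ((hasDerivAt_id z).add (hasDerivAt_inv hz)).div_const 2

/-- `z ^ m * p (J z)` written out as a polynomial, using `J z = (z ^ 2 + 1) / (2 z)`. -/
noncomputable def joukowskiLift (m : ℕ) (p : ℂ[X]) : ℂ[X] :=
  ∑ j ∈ range (m + 1), C (p.coeff j / 2 ^ j) * (X ^ (m - j) * (X ^ 2 + 1) ^ j)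

lemma natDegree_joukowskiLift_le (m : ℕ) (p : ℂ[X]) :
    (joukowskiLift m p).natDegree ≤ 2 * m := by
  refine natDegree_sum_le_of_forall_le _ _ fun j hj => ?_
  have hj : j ≤ m := Nat.lt_succ_iff.mp (mem_range.mp hj)
  calc (C (p.coeff j / 2 ^ j) * (X ^ (m - j) * (X ^ 2 + 1 : ℂ[X]) ^ j)).natDegree
      ≤ (X ^ (m - j) * (X ^ 2 + 1 : ℂ[X]) ^ j).natDegree := natDegree_C_mul_le _ _
    _ ≤ (m - j) + 2 * j := by
      have h2 : (X ^ 2 + 1 : ℂ[X]).natDegree ≤ 2 := by compute_degree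
      refine natDegree_mul_le.trans (add_le_add (natDegree_X_pow_le _) ?_)
      simpa [mul_comm] using natDegree_pow_le_of_le j h2
    _ ≤ 2 * m := by omega

lemma eval_joukowskiLift {m : ℕ} {p : ℂ[X]} (hp : p.natDegree ≤ m) {z : ℂ} (hz : z ≠ 0) :
    (joukowskiLift m p).eval z = z ^ m * p.eval (J z) := by
  rw [eval_eq_sum_range' (Nat.lt_succ_of_le hp), mul_sum, joukowskiLift, eval_finsetSum]
  refine sum_congr rfl fun j hj => ?_
  have hpow : z ^ m = z ^ (m - j) * z ^ j := by
    rw [← pow_add, Nat.sub_add_cancel (Nat.lt_succ_iff.mp (mem_range.mp hj))]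
  simp only [eval_mul, eval_C, eval_pow, eval_X, eval_add, eval_one]
  rw [J_eq_div hz, div_pow, mul_pow, hpow]
  field_simp

lemma reflect_joukowskiLift {m : ℕ} {p : ℂ[X]} (hp : p.natDegree ≤ m) :
    reflect (2 * m) (joukowskiLift m p) = joukowskiLift m p := by
  refine eq_of_eval_eq_of_ne_zero fun z hz => ?_
  have hz' : z⁻¹ ≠ 0 := inv_ne_zero hz
  have h := eval_inv_reflect_mul_pow hz' (2 * m) _ (natDegree_joukowskiLift_le m p)
  rw [inv_inv, eval_joukowskiLift hp hz', J_inv] at h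
  rw [eval_joukowskiLift hp hz, ← mul_inv_cancel_right₀ (pow_ne_zero (2 * m) hz') (eval z _), h,
    inv_pow, inv_pow, inv_inv, mul_comm 2, pow_mul, sq]
  field_simp

noncomputable abbrev legendreLift (n : ℕ) : ℂ[X] := joukowskiLift (n + 1) (legendre n)

lemma eval_derivative_legendreLift (n : ℕ) {z : ℂ} (hz : z ≠ 0) :
    (derivative (legendreLift n)).eval z = F n z := by
  have hdeg : (legendre n).natDegree ≤ n + 1 := (legendre_natDegree_le n).trans n.le_succ
  have hP : HasDerivAt (fun w => P n (J w)) (P' n (J z) * ((1 - (z ^ 2)⁻¹) / 2)) z :=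
    ((legendre n).hasDerivAt (J z)).comp z (hasDerivAt_J hz)
  have hlift : (fun w => (legendreLift n).eval w) =ᶠ[nhds z] fun w => w ^ (n + 1) * P n (J w) :=
    eventually_ne_nhds hz |>.mono fun w hw => eval_joukowskiLift hdeg hw
  have hderiv := ((hasDerivAt_pow (n + 1) z).mul hP).congr_of_eventuallyEq hlift
  rw [((legendreLift n).hasDerivAt z).unique hderiv, F, zpow_sub_one₀ hz, zpow_natCast]
  push_cast
  field_simp
  ring

lemma reflect_legendreLift (n : ℕ) : reflect (2 * (n + 1)) (legendreLift n) = legendreLift n :=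
  reflect_joukowskiLift ((legendre_natDegree_le n).trans n.le_succ)

theorem G_coefficients_general (n : ℕ) (Fpoly Gpoly : Polynomial ℂ)
    (hFpoly : ∀ z : ℂ, z ≠ 0 → Fpoly.eval z = F n z)
    (hGpoly : ∀ z : ℂ, z ≠ 0 → Gpoly.eval z = G n z)
    (hFrep : ∀ z : ℂ, Fpoly.eval z =
      ∑ k ∈ Finset.range (n + 1), Fpoly.coeff (2 * k) * z ^ (2 * k)) :
    (∀ z : ℂ, Gpoly.eval z =
      ∑ k ∈ Finset.range (n + 1), Fpoly.coeff (2 * (n - k)) * z ^ (2 * k)) ∧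
    (∀ k : ℕ, k ≤ n →
      Fpoly.coeff (2 * (n - k)) =
        ((2 * ((n : ℂ) - k) + 1) / (2 * k + 1)) * Fpoly.coeff (2 * k)) := by
  refine ⟨fun z => ?_, fun k hk => ?_⟩
  · have hG : Gpoly = ∑ k ∈ range (n + 1), C (Fpoly.coeff (2 * (n - k))) * X ^ (2 * k) :=
      eq_of_eval_eq_of_ne_zero fun z hz => by
        simp only [eval_finsetSum, eval_mul, eval_C, eval_pow, eval_X]
        rw [hGpoly z hz, G, ← hFpoly _ (one_div_ne_zero hz), hFrep,
          pow_mul_sum_inv_pow_eq n _ hz]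
    simp [hG, eval_finsetSum]
  · have hF : Fpoly = derivative (legendreLift n) := eq_of_eval_eq_of_ne_zero fun z hz => by
      rw [hFpoly z hz, eval_derivative_legendreLift n hz]
    have hsymm := coeff_derivative_symm_of_reflect_eq (reflect_legendreLift n) (i := 2 * k)
      (by omega)
    rw [← hF, show 2 * (n + 1) - 2 - 2 * k = 2 * (n - k) by omega,
      show 2 * (n + 1) - 1 - 2 * k = 2 * (n - k) + 1 by omega] at hsymm
    push_cast [Nat.cast_sub hk] at hsymm
    rw [div_mul_eq_mul_div, eq_div_iff (by norm_cast), ← hsymm]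
    ring

/-- Writing `F_n(z) = Σ_{k=0}^{n} c_k z^{2k}` (with `c_k` the coefficient of `z^{2k}` in the
polynomial `Fpoly` extending `F n`), the polynomial `Gpoly` extending `G_n(z) = z^{2n} F_n(1/z)`
satisfies `G_n(z) = Σ_{k=0}^{n} c_{n−k} z^{2k}`, and moreover
`c_{n−k} = ((2(n−k)+1)/(2k+1)) c_k` for every `0 ≤ k ≤ n`. -/
theorem G_coefficients (n : ℕ) (hn : 1 ≤ n) (Fpoly Gpoly : Polynomial ℂ)
    (hFpoly : ∀ z : ℂ, z ≠ 0 → Fpoly.eval z = F n z)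
    (hGpoly : ∀ z : ℂ, z ≠ 0 → Gpoly.eval z = G n z)
    (hFrep : ∀ z : ℂ, Fpoly.eval z =
      ∑ k ∈ Finset.range (n + 1), Fpoly.coeff (2 * k) * z ^ (2 * k)) :
    (∀ z : ℂ, Gpoly.eval z =
      ∑ k ∈ Finset.range (n + 1), Fpoly.coeff (2 * (n - k)) * z ^ (2 * k)) ∧
    (∀ k : ℕ, k ≤ n →
      Fpoly.coeff (2 * (n - k)) =
        ((2 * ((n : ℂ) - k) + 1) / (2 * k + 1)) * Fpoly.coeff (2 * k)) :=
  G_coefficients_general n Fpoly Gpoly hFpoly hGpoly hFrep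
end
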